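/- arXiv:1811.11939 — 2 statements merged into one kernel-verified Lean document; each statement's English description precedes it below -/
import Mathlib

section
/- For every nontrivial connected graph G, the rainbow disconnection number rd(G) is at most the chromatic index χ′(G). -/
variable {V : Type*} [Fintype V] [DecidableEq V]

/-- `S` separates `s` and `t` in `G`: after deleting the edges of `S`,
`s` and `t` are not reachable from each other. -/
def Separates (G : SimpleGraph V) (S : Set (Sym2 V)) (s t : V) : Prop :=
  ¬ (G.deleteEdges S).Reachable s t

/-- `λ(s,t)`: minimum size of a set of edges of `G` separating `s` and `t`. -/
noncomputable def lamST (G : SimpleGraph V) (s t : V) : ℕ :=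
  sInf {n | ∃ S : Finset (Sym2 V), ↑S ⊆ G.edgeSet ∧ Separates G ↑S s t ∧ S.card = n}

/-- Upper edge-connectivity `λ⁺(G)`: maximum of `λ(s,t)` over distinct pairs. -/
noncomputable def lamPlus (G : SimpleGraph V) : ℕ :=
  sSup {n | ∃ s t : V, s ≠ t ∧ lamST G s t = n}

/-- Edge-connectivity `λ(G)`: minimum size of an edge set whose deletion disconnects `G`. -/
noncomputable def edgeConn (G : SimpleGraph V) : ℕ :=
  sInf {n | ∃ S : Finset (Sym2 V), ↑S ⊆ G.edgeSet ∧ ¬ (G.deleteEdges ↑S).Connected ∧ S.card = n}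

/-- `G` is `k`-edge-connected: every disconnecting edge set has at least `k` edges. -/
def EdgeConnected (G : SimpleGraph V) (k : ℕ) : Prop :=
  ∀ S : Finset (Sym2 V), ↑S ⊆ G.edgeSet → ¬ (G.deleteEdges ↑S).Connected → k ≤ S.card

/-- `c` is a rainbow disconnection coloring of `G`: every pair of distinct vertices is
separated by an edge-cut whose edges receive pairwise distinct colors. -/
def IsRDColoring {α : Type*} (G : SimpleGraph V) (c : Sym2 V → α) : Prop :=
  ∀ s t : V, s ≠ t → ∃ S : Finset (Sym2 V), ↑S ⊆ G.edgeSet ∧ Set.InjOn c ↑S ∧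
    Separates G ↑S s t

/-- The rainbow disconnection number `rd(G)`: minimum number of colors in a rainbow
disconnection coloring of `G`. -/
noncomputable def rd (G : SimpleGraph V) : ℕ :=
  sInf {k | ∃ c : Sym2 V → ℕ, (∀ e ∈ G.edgeSet, c e < k) ∧ IsRDColoring G c}

/-- `c` is a proper edge-coloring of `G`: distinct edges sharing a vertex get distinct colors. -/
def IsProperEdgeColoring {α : Type*} (G : SimpleGraph V) (c : Sym2 V → α) : Prop :=
  ∀ e ∈ G.edgeSet, ∀ f ∈ G.edgeSet, e ≠ f → (∃ v : V, v ∈ e ∧ v ∈ f) → c e ≠ c f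

/-- The chromatic index `χ'(G)`: minimum number of colors in a proper edge-coloring. -/
noncomputable def chromIndex (G : SimpleGraph V) : ℕ :=
  sInf {k | ∃ c : Sym2 V → ℕ, (∀ e ∈ G.edgeSet, c e < k) ∧ IsProperEdgeColoring G c}


lemma proper_isRD (G : SimpleGraph V) (c : Sym2 V → ℕ) (h : IsProperEdgeColoring G c) :
    IsRDColoring G c := by
  classical
  intro s t hst
  refine ⟨(G.incidenceSet s).toFinset, ?_, ?_, ?_⟩
  · intro e he
    exact (Set.mem_toFinset.mp he).1
  · intro e he f hf hef
    rw [Finset.mem_coe, Set.mem_toFinset] at he hf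
    by_contra hc
    exact h e he.1 f hf.1 hc ⟨s, he.2, hf.2⟩ hef
  · intro hreach
    obtain ⟨w⟩ := hreach
    cases w with
    | nil => exact hst rfl
    | cons hadj _ =>
      rw [SimpleGraph.deleteEdges_adj] at hadj
      refine hadj.2 ?_
      rw [Finset.mem_coe, Set.mem_toFinset]
      exact ⟨hadj.1, Sym2.mem_mk_left _ _⟩

theorem rd_le_chromIndex (G : SimpleGraph V) [Nontrivial V] (hG : G.Connected) :
    rd G ≤ chromIndex G := by
  classical
  have hne : {k | ∃ c : Sym2 V → ℕ, (∀ e ∈ G.edgeSet, c e < k) ∧ IsProperEdgeColoring G c}.Nonempty := by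
    refine ⟨Fintype.card (Sym2 V), fun e => (Fintype.equivFin (Sym2 V) e : ℕ), ?_, ?_⟩
    · intro e _; exact (Fintype.equivFin (Sym2 V) e).2
    · intro e _ f _ hef _ hc
      exact hef ((Fintype.equivFin (Sym2 V)).injective (Fin.ext hc))
  have hmem := Nat.sInf_mem hne
  obtain ⟨c, hc1, hc2⟩ := hmem
  exact Nat.sInf_le ⟨c, hc1, proper_isRD G c hc2⟩
end

section
/- Let G be a 3-edge-connected cubic graph. Then χ′(G) = 3 if and only if rd(G) = 3. -/
variable {V : Type*} [Fintype V] [DecidableEq V]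

/-! A proper `3`-edge-colouring is a rainbow disconnection colouring, as the three edges at a
vertex form a rainbow cut; and no colouring with fewer than `3` colours makes a separating set of
a `3`-edge-connected graph rainbow.

Conversely, let `c` be a rainbow disconnection colouring with colours `0, 1, 2`. A rainbow
separating set has at most `3` edges and contains the edge cut `∂X` of one side `X`, which has at
least `3`; so `∂X` is that set and carries each colour exactly once. In a cubic graph
`|X| ≡ |∂X| (mod 2)`, so these `X` are odd, and by submodularity of `|∂·|` two of them cannot
cross. Fixing a vertex `v` and inducting on `|X|` over such `X ∌ v`, every vertex sees each colour
once: the only vertex of `X` not covered by a smaller such set is handled by the parity count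
`∑_{a ∈ X} deg_i a ≡ |∂X ∩ c⁻¹(i)| = 1`. -/

open Finset

namespace SimpleGraph

lemma even_card_interedges_self {W : Type*} (G : SimpleGraph W) [DecidableRel G.Adj]
    (X : Finset W) : Even #(G.interedges X X) := by
  rw [← ZMod.natCast_eq_zero_iff_even, card_eq_sum_ones, Nat.cast_sum]
  refine sum_involution (fun p _ => p.swap) (fun _ _ => by decide) (fun p hp _ h => ?_)
    (fun p hp => G.swap_mem_interedges_iff.2 hp) (fun p _ => p.swap_swap)
  rw [mem_interedges_iff] at hp
  exact hp.2.2.ne (congrArg Prod.snd h)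

section EdgeColorClass

variable {α W : Type*}

def edgeColorClass (G : SimpleGraph W) (c : Sym2 W → α) (i : α) : SimpleGraph W where
  Adj a b := G.Adj a b ∧ c s(a, b) = i
  symm := ⟨fun _ _ h => ⟨h.1.symm, Sym2.eq_swap ▸ h.2⟩⟩
  loopless := ⟨fun _ h => G.irrefl h.1⟩

@[simp]
lemma edgeColorClass_adj {G : SimpleGraph W} {c : Sym2 W → α} {i : α} {a b : W} :
    (G.edgeColorClass c i).Adj a b ↔ G.Adj a b ∧ c s(a, b) = i :=
  Iff.rfl

instance {G : SimpleGraph W} [DecidableRel G.Adj] [DecidableEq α] (c : Sym2 W → α) (i : α) :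
    DecidableRel (G.edgeColorClass c i).Adj :=
  fun _ _ => inferInstanceAs (Decidable (_ ∧ _))

lemma degree_eq_sum_edgeColorClass [Fintype W] {G : SimpleGraph W} [DecidableRel G.Adj]
    {c : Sym2 W → ℕ} {k : ℕ} (hc : ∀ e ∈ G.edgeSet, c e < k) (a : W) :
    G.degree a = ∑ i ∈ range k, (G.edgeColorClass c i).degree a := by
  have hnbr : ∀ i, (G.edgeColorClass c i).neighborFinset a =
      (G.neighborFinset a).filter (fun b => c s(a, b) = i) := by
    intro i; ext b; simp
  simp only [← card_neighborFinset_eq_degree, hnbr]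
  exact card_eq_sum_card_fiberwise fun b hb => mem_range.2 (hc _ (by simpa using hb))

end EdgeColorClass

section EdgeCut

variable (G : SimpleGraph V) [DecidableRel G.Adj]

def edgeCut (X : Finset V) : Finset (Sym2 V) :=
  (G.interedges X Xᶜ).image fun p => s(p.1, p.2)

variable {G} in
lemma mem_edgeCut {X : Finset V} {e : Sym2 V} :
    e ∈ G.edgeCut X ↔ ∃ a ∈ X, ∃ b ∉ X, G.Adj a b ∧ e = s(a, b) := by
  simp only [edgeCut, mem_image, Prod.exists, mk_mem_interedges_iff, mem_compl]
  grind

lemma card_edgeCut (X : Finset V) : #(G.edgeCut X) = #(G.interedges X Xᶜ) := by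
  refine card_image_of_injOn fun p hp q hq hpq => ?_
  rw [mem_coe, mem_interedges_iff, mem_compl] at hp hq
  rcases Sym2.mk_eq_mk_iff.1 hpq with h | h
  · exact h
  · have h₁ : p.1 = q.2 := congrArg Prod.fst h
    exact absurd (h₁ ▸ hp.1) hq.2.1

lemma edgeCut_compl (X : Finset V) : G.edgeCut Xᶜ = G.edgeCut X := by
  ext e
  simp only [mem_edgeCut, mem_compl, not_not]
  constructor <;> rintro ⟨a, ha, b, hb, hab, rfl⟩ <;> exact ⟨b, hb, a, ha, hab.symm, Sym2.eq_swap⟩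

@[simp]
lemma edgeCut_univ : G.edgeCut univ = ∅ := by
  simp [edgeCut, interedges_def]

lemma sum_degree_eq_card_interedges (X : Finset V) :
    ∑ a ∈ X, G.degree a = #(G.interedges X X) + #(G.interedges X Xᶜ) := by
  have hsplit : G.interedges X univ = G.interedges X X ∪ G.interedges X Xᶜ := by
    ext p; simp only [mem_union, mem_interedges_iff, mem_univ, mem_compl]; tauto
  rw [← card_union_of_disjoint (G.interedges_disjoint_right X disjoint_compl_right), ← hsplit,
    interedges_def, card_filter, sum_product]
  refine sum_congr rfl fun a _ => ?_
  rw [degree, neighborFinset_eq_filter, card_filter]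

lemma sum_degree_mod_two (X : Finset V) :
    (∑ a ∈ X, G.degree a) % 2 = #(G.edgeCut X) % 2 := by
  obtain ⟨k, hk⟩ := G.even_card_interedges_self X
  rw [sum_degree_eq_card_interedges, card_edgeCut, hk]
  omega

lemma card_edgeCut_eq_sum (X : Finset V) :
    #(G.edgeCut X) = ∑ p : V × V, if G.Adj p.1 p.2 ∧ p.1 ∈ X ∧ p.2 ∉ X then 1 else 0 := by
  rw [card_edgeCut, ← card_filter]
  congr 1
  ext p
  simp only [mem_interedges_iff, mem_filter, mem_univ, mem_compl, true_and]
  tauto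

/-- Counted with the orientation from inside to outside, the inequality already holds for each
ordered pair of vertices separately. -/
lemma card_edgeCut_inter_add_card_edgeCut_union_le (X Y : Finset V) :
    #(G.edgeCut (X ∩ Y)) + #(G.edgeCut (X ∪ Y)) ≤ #(G.edgeCut X) + #(G.edgeCut Y) := by
  simp only [card_edgeCut_eq_sum, ← sum_add_distrib]
  refine sum_le_sum fun p _ => ?_
  simp only [mem_inter, mem_union]
  split_ifs <;> simp_all

variable {G}

lemma IsRegularOfDegree.card_mod_two_eq (hG : G.IsRegularOfDegree 3) (X : Finset V) :
    #X % 2 = #(G.edgeCut X) % 2 := by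
  have h := G.sum_degree_mod_two X
  rw [sum_congr rfl fun a _ => hG a, sum_const, smul_eq_mul] at h
  omega

lemma edgeCut_subset_edgeSet (X : Finset V) : ↑(G.edgeCut X) ⊆ G.edgeSet := by
  intro e he
  obtain ⟨a, -, b, -, hab, rfl⟩ := mem_edgeCut.1 he
  exact hab

lemma separates_edgeCut {X : Finset V} {s t : V} (hs : s ∈ X) (ht : t ∉ X) :
    Separates G ↑(G.edgeCut X) s t := by
  rintro ⟨p⟩
  obtain ⟨d, -, hd₁, hd₂⟩ := p.exists_boundary_dart (↑X) hs ht
  have hd := deleteEdges_adj.1 d.adj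
  exact hd.2 (mem_edgeCut.2 ⟨_, hd₁, _, hd₂, hd.1, rfl⟩)

lemma exists_edgeCut_subset_of_separates {S : Finset (Sym2 V)} {s t : V}
    (h : Separates G ↑S s t) : ∃ X : Finset V, s ∈ X ∧ t ∉ X ∧ G.edgeCut X ⊆ S := by
  classical
  refine ⟨({u | (G.deleteEdges ↑S).Reachable s u} : Finset V), by simp,
    by simpa [Separates] using h, fun e he => ?_⟩
  obtain ⟨a, ha, b, hb, hab, rfl⟩ := mem_edgeCut.1 he
  simp only [mem_filter, mem_univ, true_and] at ha hb
  by_contra heS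
  exact hb (ha.trans (deleteEdges_adj.2 ⟨hab, heS⟩).reachable)

lemma edgeCut_edgeColorClass {α : Type*} [DecidableEq α] (c : Sym2 V → α) (i : α)
    (X : Finset V) : (G.edgeColorClass c i).edgeCut X = (G.edgeCut X).filter (c · = i) := by
  ext e
  simp only [mem_edgeCut, mem_filter, edgeColorClass_adj]
  constructor
  · rintro ⟨a, ha, b, hb, ⟨hab, hi⟩, rfl⟩
    exact ⟨⟨a, ha, b, hb, hab, rfl⟩, hi⟩
  · rintro ⟨⟨a, ha, b, hb, hab, rfl⟩, hi⟩
    exact ⟨a, ha, b, hb, ⟨hab, hi⟩, rfl⟩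

lemma card_edgeCut_eq_sum_edgeColorClass {c : Sym2 V → ℕ} {k : ℕ}
    (hc : ∀ e ∈ G.edgeSet, c e < k) (X : Finset V) :
    #(G.edgeCut X) = ∑ i ∈ range k, #((G.edgeColorClass c i).edgeCut X) := by
  simp only [edgeCut_edgeColorClass]
  exact card_eq_sum_card_fiberwise fun e he => mem_range.2 (hc e (edgeCut_subset_edgeSet X he))

end EdgeCut

end SimpleGraph

open SimpleGraph

lemma card_filter_eq_one_of_injOn {β : Type*} {S : Finset β} {f : β → ℕ}
    (hf : Set.InjOn f S) (hS : ∀ x ∈ S, f x < #S) {i : ℕ} (hi : i < #S) :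
    #{x ∈ S | f x = i} = 1 := by
  have himage : S.image f = range #S :=
    eq_of_subset_of_card_le (fun j hj => by
      obtain ⟨x, hx, rfl⟩ := mem_image.1 hj
      exact mem_range.2 (hS x hx)) (by rw [card_range, card_image_of_injOn hf])
  obtain ⟨x, hx, rfl⟩ := mem_image.1 (himage ▸ mem_range.2 hi)
  refine card_eq_one.2 ⟨x, ext fun y => ?_⟩
  simp only [mem_filter, mem_singleton]
  exact ⟨fun hy => hf hy.1 hx hy.2, by rintro rfl; exact ⟨hx, rfl⟩⟩

section EdgeConnectivity

variable {W : Type*} {G : SimpleGraph W}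

lemma EdgeConnected.connected {k : ℕ} (h : EdgeConnected G k) (hk : 0 < k) : G.Connected := by
  by_contra hG
  have := h ∅ (by simp) (by simpa using hG)
  simp_all

lemma EdgeConnected.le_of_isRDColoring {m k : ℕ} (h : EdgeConnected G m) {c : Sym2 W → ℕ}
    (hc : ∀ e ∈ G.edgeSet, c e < k) (hrd : IsRDColoring G c) {s t : W} (hst : s ≠ t) : m ≤ k := by
  obtain ⟨S, hSG, hinj, hsep⟩ := hrd s t hst
  calc m ≤ #S := h S hSG fun hconn => hsep (hconn.preconnected s t)
    _ ≤ #(range k) := card_le_card_of_injOn c (fun e he => mem_range.2 (hc e (hSG he))) hinj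
    _ = k := card_range k

end EdgeConnectivity

variable {G : SimpleGraph V} [DecidableRel G.Adj]

lemma EdgeConnected.le_card_edgeCut {k : ℕ} (h : EdgeConnected G k) {X : Finset V} {s t : V}
    (hs : s ∈ X) (ht : t ∉ X) : k ≤ #(G.edgeCut X) :=
  h _ (edgeCut_subset_edgeSet X) fun hconn => separates_edgeCut hs ht (hconn.preconnected s t)

lemma card_edgeCut_inter_eq_three (h3ec : EdgeConnected G 3) {X Y : Finset V}
    (hX : #(G.edgeCut X) = 3) (hY : #(G.edgeCut Y) = 3) {a v : V} (haX : a ∈ X) (haY : a ∈ Y)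
    (hvX : v ∉ X) (hvY : v ∉ Y) : #(G.edgeCut (X ∩ Y)) = 3 := by
  have hsub := G.card_edgeCut_inter_add_card_edgeCut_union_le X Y
  have hinter := h3ec.le_card_edgeCut (mem_inter.2 ⟨haX, haY⟩) fun h => hvX (mem_inter.1 h).1
  have hunion := h3ec.le_card_edgeCut (t := v) (mem_union_left Y haX) (by simp [hvX, hvY])
  omega

/-- Otherwise `X ∩ Y` and `X ∩ Yᶜ` would also have `3`-edge-cuts, making both of them and hence
`X` odd, while `X = (X ∩ Y) ∪ (X ∩ Yᶜ)`. -/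
lemma SimpleGraph.IsRegularOfDegree.ssubset_of_card_edgeCut_eq_three
    (hG : G.IsRegularOfDegree 3) (h3ec : EdgeConnected G 3) {X Y : Finset V}
    (hX : #(G.edgeCut X) = 3) (hY : #(G.edgeCut Y) = 3) {a b v : V} (haX : a ∈ X) (haY : a ∈ Y)
    (hbX : b ∈ X) (hbY : b ∉ Y) (hvX : v ∉ X) (hvY : v ∉ Y) : Y ⊂ X := by
  refine (ssubset_iff_of_subset fun z hzY => ?_).2 ⟨b, hbX, hbY⟩
  by_contra hzX
  have hYc : #(G.edgeCut Yᶜ) = 3 := by rwa [edgeCut_compl]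
  have hA := card_edgeCut_inter_eq_three h3ec hX hY haX haY hvX hvY
  have hB := card_edgeCut_inter_eq_three h3ec hX hYc hbX (mem_compl.2 hbY) hzX
    (by simpa using hzY)
  have hcard : #(X ∩ Y) + #(X ∩ Yᶜ) = #X := by
    rw [← sdiff_eq_inter_compl, card_inter_add_card_sdiff]
  have := hG.card_mod_two_eq X
  have := hG.card_mod_two_eq (X ∩ Y)
  have := hG.card_mod_two_eq (X ∩ Yᶜ)
  omega

variable {c : Sym2 V → ℕ}

def IsRainbowAt (G : SimpleGraph V) [DecidableRel G.Adj] (c : Sym2 V → ℕ) (u : V) : Prop :=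
  ∀ i < 3, (G.edgeColorClass c i).degree u = 1

def IsRainbowCut (G : SimpleGraph V) [DecidableRel G.Adj] (c : Sym2 V → ℕ) (X : Finset V) :
    Prop :=
  ∀ i < 3, #((G.edgeColorClass c i).edgeCut X) = 1

lemma IsRainbowCut.compl {X : Finset V} (h : IsRainbowCut G c X) : IsRainbowCut G c Xᶜ :=
  fun i hi => by rw [edgeCut_compl]; exact h i hi

lemma IsRainbowCut.card_edgeCut (hc : ∀ e ∈ G.edgeSet, c e < 3) {X : Finset V}
    (h : IsRainbowCut G c X) : #(G.edgeCut X) = 3 := by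
  rw [card_edgeCut_eq_sum_edgeColorClass hc, sum_congr rfl fun i hi => h i (mem_range.1 hi)]
  simp

lemma IsRDColoring.exists_isRainbowCut (hrd : IsRDColoring G c) (hc : ∀ e ∈ G.edgeSet, c e < 3)
    (h3ec : EdgeConnected G 3) {s t : V} (hst : s ≠ t) :
    ∃ X : Finset V, s ∈ X ∧ t ∉ X ∧ IsRainbowCut G c X := by
  obtain ⟨S, hSG, hinj, hsep⟩ := hrd s t hst
  obtain ⟨X, hs, ht, hXS⟩ := exists_edgeCut_subset_of_separates hsep
  have hS : #S ≤ 3 := by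
    simpa using card_le_card_of_injOn c (fun e he => mem_range.2 (hc e (hSG he))) hinj
  have hcut := h3ec.le_card_edgeCut hs ht
  obtain rfl : G.edgeCut X = S := eq_of_subset_of_card_le hXS (by omega)
  refine ⟨X, hs, ht, fun i hi => ?_⟩
  rw [edgeCut_edgeColorClass]
  exact card_filter_eq_one_of_injOn hinj (fun e he => by have := hc e (hSG he); omega) (by omega)

lemma isRainbowAt_of_forall_ne (hG : G.IsRegularOfDegree 3) (hc : ∀ e ∈ G.edgeSet, c e < 3)
    {X : Finset V} {u : V} (hu : u ∈ X)
    (hX : ∀ i < 3, #((G.edgeColorClass c i).edgeCut X) % 2 = #X % 2)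
    (hne : ∀ a ∈ X, a ≠ u → IsRainbowAt G c a) : IsRainbowAt G c u := by
  have hodd : ∀ i < 3, (G.edgeColorClass c i).degree u % 2 = 1 := by
    intro i hi
    have hsum := (G.edgeColorClass c i).sum_degree_mod_two X
    rw [← add_sum_erase X _ hu, sum_congr rfl fun a ha =>
        hne a (mem_of_mem_erase ha) (ne_of_mem_erase ha) i hi, sum_const, card_erase_of_mem hu,
      smul_eq_mul, mul_one, hX i hi] at hsum
    have := card_pos.2 ⟨u, hu⟩
    omega
  have hdeg := degree_eq_sum_edgeColorClass hc u
  simp only [hG u, sum_range_succ, sum_range_zero, zero_add] at hdeg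
  have h₀ := hodd 0 (by norm_num)
  have h₁ := hodd 1 (by norm_num)
  have h₂ := hodd 2 (by norm_num)
  intro i hi
  interval_cases i <;> omega

/-- Separate `w` from `u` by a rainbow cut `Z`: whichever of `Z`, `Zᶜ` avoids `v` cannot cross
`X`. -/
lemma exists_isRainbowCut_ssubset (hG : G.IsRegularOfDegree 3) (h3ec : EdgeConnected G 3)
    (hc : ∀ e ∈ G.edgeSet, c e < 3)
    (hsep : ∀ s t : V, s ≠ t → ∃ X : Finset V, s ∈ X ∧ t ∉ X ∧ IsRainbowCut G c X)
    {X : Finset V} (hX : IsRainbowCut G c X) {u w v : V} (hu : u ∈ X) (hw : w ∈ X) (hwu : w ≠ u)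
    (hv : v ∉ X) : ∃ W ⊂ X, IsRainbowCut G c W ∧ v ∉ W ∧ (w ∈ W ∨ u ∈ W) := by
  obtain ⟨Z, hwZ, huZ, hZ⟩ := hsep w u hwu
  have hX₃ := hX.card_edgeCut hc
  by_cases hvZ : v ∈ Z
  · exact ⟨Zᶜ, hG.ssubset_of_card_edgeCut_eq_three h3ec hX₃ (hZ.compl.card_edgeCut hc) hu
      (mem_compl.2 huZ) hw (by simpa using hwZ) hv (by simpa using hvZ), hZ.compl,
      by simpa using hvZ, Or.inr (mem_compl.2 huZ)⟩
  · exact ⟨Z, hG.ssubset_of_card_edgeCut_eq_three h3ec hX₃ (hZ.card_edgeCut hc) hw hwZ hu huZ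
      hv hvZ, hZ, hvZ, Or.inl hwZ⟩

lemma IsRainbowCut.card_mod_two (hG : G.IsRegularOfDegree 3) (hc : ∀ e ∈ G.edgeSet, c e < 3)
    {X : Finset V} (hX : IsRainbowCut G c X) : #X % 2 = 1 := by
  rw [hG.card_mod_two_eq, hX.card_edgeCut hc]

/-- If `u` lies in no smaller rainbow cut avoiding `v`, then every other vertex of `X` does, so
all of them are rainbow by induction, and parity forces `u` to be rainbow as well. -/
lemma IsRainbowCut.isRainbowAt_of_mem (hG : G.IsRegularOfDegree 3) (h3ec : EdgeConnected G 3)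
    (hc : ∀ e ∈ G.edgeSet, c e < 3)
    (hsep : ∀ s t : V, s ≠ t → ∃ X : Finset V, s ∈ X ∧ t ∉ X ∧ IsRainbowCut G c X)
    {X : Finset V} (hX : IsRainbowCut G c X) {u v : V} (hu : u ∈ X) (hv : v ∉ X) :
    IsRainbowAt G c u := by
  induction X using Finset.strongInduction generalizing u with
  | H X ih =>
  by_cases hcov : ∃ W ⊂ X, IsRainbowCut G c W ∧ v ∉ W ∧ u ∈ W
  · obtain ⟨W, hWX, hW, hvW, huW⟩ := hcov
    exact ih W hWX hW huW hvW
  refine isRainbowAt_of_forall_ne hG hc hu (fun i hi => by rw [hX i hi, hX.card_mod_two hG hc])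
    fun w hw hwu => ?_
  obtain ⟨W, hWX, hW, hvW, hwW | huW⟩ :=
    exists_isRainbowCut_ssubset hG h3ec hc hsep hX hu hw hwu hv
  · exact ih W hWX hW hwW hvW
  · exact absurd ⟨W, hWX, hW, hvW, huW⟩ hcov

lemma IsRDColoring.isRainbowAt (hrd : IsRDColoring G c) (hG : G.IsRegularOfDegree 3)
    (h3ec : EdgeConnected G 3) (hc : ∀ e ∈ G.edgeSet, c e < 3) (v : V) : IsRainbowAt G c v := by
  have hsep := fun s t (hst : s ≠ t) => hrd.exists_isRainbowCut hc h3ec hst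
  refine isRainbowAt_of_forall_ne hG hc (mem_univ v) (fun i _ => ?_) fun w _ hwv => ?_
  · rw [hG.card_mod_two_eq, edgeCut_univ, edgeCut_univ]
  · obtain ⟨X, hwX, hvX, hX⟩ := hsep w v hwv
    exact hX.isRainbowAt_of_mem hG h3ec hc hsep hwX hvX

omit [DecidableEq V] in
lemma isProperEdgeColoring_of_forall_isRainbowAt (hc : ∀ e ∈ G.edgeSet, c e < 3)
    (h : ∀ v, IsRainbowAt G c v) : IsProperEdgeColoring G c := by
  rintro e he f hf hef ⟨x, hxe, hxf⟩ hcef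
  obtain ⟨y, rfl⟩ := Sym2.mem_iff_exists.1 hxe
  obtain ⟨z, rfl⟩ := Sym2.mem_iff_exists.1 hxf
  obtain ⟨b, hb⟩ := card_eq_one.1 <|
    (card_neighborFinset_eq_degree _ _).trans (h x _ (hc _ he))
  have hy : y ∈ (G.edgeColorClass c (c s(x, y))).neighborFinset x := by simpa using he
  have hz : z ∈ (G.edgeColorClass c (c s(x, y))).neighborFinset x := by simpa [hcef] using hf
  rw [hb, mem_singleton] at hy hz
  exact hef (by rw [hy, hz])

lemma IsProperEdgeColoring.isRDColoring {α : Type*} {c : Sym2 V → α}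
    (h : IsProperEdgeColoring G c) : IsRDColoring G c := by
  intro s t hst
  refine ⟨G.edgeCut {s}, edgeCut_subset_edgeSet _, fun e he f hf hcef => ?_,
    separates_edgeCut (mem_singleton_self s) (by simpa using hst.symm)⟩
  by_contra hef
  obtain ⟨a, ha, b, -, hab, rfl⟩ := mem_edgeCut.1 he
  obtain ⟨a', ha', b', -, hab', rfl⟩ := mem_edgeCut.1 hf
  rw [mem_singleton] at ha ha'
  subst ha ha'
  exact h _ hab _ hab' hef ⟨_, Sym2.mem_mk_left _ _, Sym2.mem_mk_left _ _⟩ hcef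

lemma Nat.sInf_eq_iff_mem {S : Set ℕ} {n : ℕ} (hn : n ≠ 0) (h : ∀ k ∈ S, n ≤ k) :
    sInf S = n ↔ n ∈ S :=
  ⟨fun hS => hS ▸ Nat.sInf_mem (Nat.nonempty_of_pos_sInf (by omega)),
    fun hnS => le_antisymm (Nat.sInf_le hnS) (le_csInf ⟨n, hnS⟩ h)⟩

theorem chromIndex_eq_three_iff_rd_eq_three (G : SimpleGraph V) [DecidableRel G.Adj]
    (hcubic : ∀ v : V, G.degree v = 3) (h3ec : EdgeConnected G 3) :
    chromIndex G = 3 ↔ rd G = 3 := by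
  obtain ⟨v⟩ := (h3ec.connected three_pos).nonempty
  obtain ⟨w, hvw⟩ := (G.degree_pos_iff_exists_adj v).1 (by rw [hcubic v]; norm_num)
  have hrd : ∀ k ∈ {k | ∃ c : Sym2 V → ℕ, (∀ e ∈ G.edgeSet, c e < k) ∧ IsRDColoring G c},
      3 ≤ k := fun k ⟨_, hc, hrdc⟩ => h3ec.le_of_isRDColoring hc hrdc hvw.ne
  have hchrom : ∀ k ∈ {k | ∃ c : Sym2 V → ℕ, (∀ e ∈ G.edgeSet, c e < k) ∧
      IsProperEdgeColoring G c}, 3 ≤ k := fun k ⟨c, hc, hp⟩ => hrd k ⟨c, hc, hp.isRDColoring⟩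
  rw [chromIndex, rd, Nat.sInf_eq_iff_mem three_ne_zero hrd,
    Nat.sInf_eq_iff_mem three_ne_zero hchrom]
  constructor
  · rintro ⟨c, hc, hp⟩
    exact ⟨c, hc, hp.isRDColoring⟩
  · rintro ⟨c, hc, hrdc⟩
    exact ⟨c, hc, isProperEdgeColoring_of_forall_isRainbowAt hc (hrdc.isRainbowAt hcubic h3ec hc)⟩
end
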